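/- arXiv:1905.03067 — 3 statements merged into one kernel-verified Lean document; each statement's English description precedes it below -/
import Mathlib

section
/- Let α₁,…,αₙ ∈ R satisfy ∑ᵢ σ(αᵢ)·αᵢ = 1. Then there is exactly one index i with αᵢ ≠ 0, and for this index αᵢ = q^m or αᵢ = −q^m for some m ∈ ℤ. -/
/-! The bar involution is forced to be `invert`, and the constant term of `invert α * α` is
the sum of the squares of the coefficients of `α`. So the hypothesis says that the squares of
all coefficients of all `αᵢ`, a family of nonnegative integers, sum to `1`: exactly one `αᵢ` is
nonzero, it has exactly one nonzero coefficient, and that coefficient is `±1`. -/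

open LaurentPolynomial

theorem Int.exists_eq_one_of_sum_eq_one {ι : Type*} {s : Finset ι} {x : ι → ℤ}
    (hx : ∀ i ∈ s, 0 ≤ x i) (h : ∑ i ∈ s, x i = 1) :
    ∃ i ∈ s, x i = 1 ∧ ∀ j ∈ s, j ≠ i → x j = 0 := by
  classical
  obtain ⟨i, hi, hxi⟩ := Finset.exists_ne_zero_of_sum_ne_zero (h ▸ one_ne_zero)
  have hsplit : x i + ∑ j ∈ s.erase i, x j = 1 := by rwa [Finset.add_sum_erase _ _ hi]
  have hrest : 0 ≤ ∑ j ∈ s.erase i, x j :=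
    Finset.sum_nonneg fun j hj => hx j (Finset.mem_of_mem_erase hj)
  have hxi1 : x i = 1 := by have := hx i hi; omega
  refine ⟨i, hi, hxi1, fun j hj hji => ?_⟩
  exact (Finset.sum_eq_zero_iff_of_nonneg fun k hk => hx k (Finset.mem_of_mem_erase hk)).mp
    (by omega) j (Finset.mem_erase.mpr ⟨hji, hj⟩)

namespace LaurentPolynomial

theorem ringHom_ext_int {S : Type*} [Semiring S] {f g : ℤ[T;T⁻¹] →+* S}
    (h : f (T 1) = g (T 1)) : f = g :=
  AddMonoidAlgebra.ringHom_ext' (RingHom.ext_int _ _) (MonoidHom.ext_mint h)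

theorem coeff_invert_mul_self_zero {R : Type*} [CommSemiring R] (f : R[T;T⁻¹]) :
    (invert f * f).coeff 0 = ∑ n ∈ f.coeff.support, f.coeff n ^ 2 := by
  simp [AddMonoidAlgebra.coeff_mul_apply_right, Finsupp.sum, sq]

theorem eq_zero_of_sum_sq_coeff_eq_zero {R : Type*} [Ring R] [LinearOrder R]
    [IsStrictOrderedRing R] {f : R[T;T⁻¹]} (h : ∑ n ∈ f.coeff.support, f.coeff n ^ 2 = 0) :
    f = 0 := by
  have hsq := (Finset.sum_eq_zero_iff_of_nonneg fun n _ => sq_nonneg (f.coeff n)).mp h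
  have hsupp : f.coeff.support = ∅ := Finset.eq_empty_of_forall_notMem fun n hn =>
    Finsupp.mem_support_iff.mp hn (pow_eq_zero_iff two_ne_zero |>.mp (hsq n hn))
  exact AddMonoidAlgebra.coeff_eq_zero.mp (Finsupp.support_eq_empty.mp hsupp)

theorem eq_T_or_neg_T_of_sum_sq_coeff_eq_one {f : ℤ[T;T⁻¹]}
    (h : ∑ n ∈ f.coeff.support, f.coeff n ^ 2 = 1) : ∃ m, f = T m ∨ f = -T m := by
  obtain ⟨m, -, hm, hrest⟩ := Int.exists_eq_one_of_sum_eq_one (fun n _ => sq_nonneg _) h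
  have hsupp : f.coeff.support ⊆ {m} := fun n hn => Finset.mem_singleton.mpr <| by
    by_contra hnm
    exact Finsupp.mem_support_iff.mp hn (pow_eq_zero_iff two_ne_zero |>.mp (hrest n hn hnm))
  have hf : f = C (f.coeff m) * T m := by
    rw [← single_eq_C_mul_T]
    exact AddMonoidAlgebra.ext (Finsupp.support_subset_singleton.mp hsupp)
  refine ⟨m, ?_⟩
  rcases sq_eq_one_iff.mp hm with h1 | h1
  · exact .inl (by rw [hf, h1, map_one, one_mul])
  · exact .inr (by rw [hf, h1, map_neg, map_one, neg_one_mul])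

end LaurentPolynomial

/-- In `R = ℤ[q,q⁻¹]` with the bar involution `σ` (the ring homomorphism
determined by `σ(q) = q⁻¹`): if `α₁, …, αₙ ∈ R` satisfy `∑ᵢ σ(αᵢ)·αᵢ = 1`, then there is
exactly one index `i` with `αᵢ ≠ 0`, and for this index `αᵢ = ±q^m` for some `m ∈ ℤ`. -/
theorem stmt2 (n : ℕ)
    (σ : LaurentPolynomial ℤ →+* LaurentPolynomial ℤ)
    (hσ : σ (T 1) = T (-1))
    (α : Fin n → LaurentPolynomial ℤ)
    (h : ∑ i, σ (α i) * α i = 1) :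
    ∃ i : Fin n, (α i ≠ 0 ∧ ∀ j : Fin n, α j ≠ 0 → j = i) ∧
      ∃ m : ℤ, α i = T m ∨ α i = -T m := by
  have hσ_eq : σ = (invert (R := ℤ) : ℤ[T;T⁻¹] →+* ℤ[T;T⁻¹]) :=
    ringHom_ext_int (by simpa using hσ)
  have hsum : ∑ i, ∑ k ∈ (α i).coeff.support, (α i).coeff k ^ 2 = 1 := by
    simpa [hσ_eq, coeff_invert_mul_self_zero] using congrArg (·.coeff 0) h
  obtain ⟨i, -, hi, hrest⟩ :=
    Int.exists_eq_one_of_sum_eq_one (fun i _ => Finset.sum_nonneg fun k _ => sq_nonneg _) hsum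
  refine ⟨i, ⟨fun h0 => by simp [h0] at hi, fun j hj => ?_⟩,
    eq_T_or_neg_T_of_sum_sq_coeff_eq_one hi⟩
  by_contra hji
  exact hj (eq_zero_of_sum_sq_coeff_eq_zero (hrest j (Finset.mem_univ j) hji))
end

section
/- Let Γ be a finite connected oriented simple graph with spanning tree T, fix a vertex v₀ ∈ V, and let D_q ∈ Mat_{V×E}(ℤ[q]) be the q-incidence matrix: D_q(v,e) = D(v,e) for e ∈ T and D_q(v,e) = q·D(v,e) for e ∉ T. For a subset J ⊆ E with |J| = |V| − 1, let D_J be the square submatrix of D_q with rows indexed by V∖{v₀} and columns indexed by J. If J is not a spanning tree of Γ (equivalently, the spanning subgraph (V,J) contains a cycle), then det D_J = 0. If J is a spanning tree of Γ, then det D_J = q^{|J∖T|} or det D_J = −q^{|J∖T|}. -/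
/-! The `q`-weighted submatrix is the integer reduced incidence matrix `B` of `J` with the columns
of the edges outside `T` multiplied by `q`, so its determinant is `q ^ |J \ T| * det B`.
If `(V, J)` is disconnected, the indicator vector of a component avoiding `v₀` lies in the
left kernel of `B`, so `det B = 0`. If `(V, J)` is connected, the signed edge vectors of walks
from `v₀` to the other vertices form a right inverse of `B` over `ℤ` (a walk's boundary
telescopes to its endpoints), so `det B` is a unit of `ℤ`, i.e. `±1`. -/

/-- The incidence matrix of an oriented simple graph. -/
def incMat {V : Type} [DecidableEq V] (G : SimpleGraph V)
    (head tail : G.edgeSet → V) : Matrix V G.edgeSet ℤ :=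
  fun v e => if v = head e then 1 else if v = tail e then -1 else 0

/-- `head` and `tail` form an orientation of `G`. -/
def IsOrientation {V : Type} (G : SimpleGraph V) (head tail : G.edgeSet → V) : Prop :=
  ∀ e : G.edgeSet, (e : Sym2 V) = s(head e, tail e)

/-- `T` is a spanning tree of `G`. -/
def IsSpanningTree {V : Type} [Fintype V] (G : SimpleGraph V) (T : Set G.edgeSet) : Prop :=
  (SimpleGraph.fromEdgeSet (Subtype.val '' T)).Connected ∧ T.ncard + 1 = Fintype.card V

open Polynomial

theorem Fintype.prod_ite_mem_eq_pow_ncard_diff {α M : Type*} [CommMonoid M] {J : Set α}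
    [Fintype J] (T : Set α) [DecidablePred (· ∈ T)] (a : M) :
    ∏ f : J, (if (f : α) ∈ T then 1 else a) = a ^ (J \ T).ncard := by
  rw [Finset.prod_ite, Finset.prod_const_one, Finset.prod_const, one_mul, ← Fintype.card_subtype,
    ← Nat.card_eq_fintype_card, ← Nat.card_coe_set_eq]
  exact congrArg (a ^ ·) <|
    Nat.card_congr (Equiv.subtypeSubtypeEquivSubtypeInter (· ∈ J) (· ∉ T))

namespace IsOrientation

variable {V : Type} {G : SimpleGraph V} {head tail : G.edgeSet → V}

theorem head_ne_tail (hor : IsOrientation G head tail) (e : G.edgeSet) : head e ≠ tail e := by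
  have h : (e : Sym2 V) ∈ G.edgeSet := e.prop
  rw [hor e, SimpleGraph.mem_edgeSet] at h
  exact h.ne

variable [DecidableEq V]

theorem incMat_apply (hor : IsOrientation G head tail) (v : V) (e : G.edgeSet) :
    incMat G head tail v e = (if v = head e then 1 else 0) - (if v = tail e then 1 else 0) := by
  have := hor.head_ne_tail e
  unfold incMat
  split_ifs <;> simp_all

theorem sum_mul_incMat [Fintype V] (hor : IsOrientation G head tail) (x : V → ℤ)
    (e : G.edgeSet) :
    ∑ v, x v * incMat G head tail v e = x (head e) - x (tail e) := by
  simp [hor.incMat_apply, mul_sub, Finset.sum_sub_distrib]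

end IsOrientation

section WalkVector

variable {V : Type} [DecidableEq V] {G : SimpleGraph V} (head : G.edgeSet → V)
  {tail : G.edgeSet → V}

def dartVec (J : Set G.edgeSet) (a b : V) : J → ℤ :=
  fun f => if (f.val : Sym2 V) = s(a, b) then (if head f.val = b then 1 else -1) else 0

def walkVec {J : Set G.edgeSet} {a b : V}
    (w : (SimpleGraph.fromEdgeSet (Subtype.val '' J)).Walk a b) : J → ℤ :=
  (w.darts.map fun d => dartVec head J d.toProd.1 d.toProd.2).sum

variable {head} {J : Set G.edgeSet} [Fintype J]

theorem IsOrientation.sum_incMat_mul_dartVec (hor : IsOrientation G head tail) {a b : V}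
    (hab : (SimpleGraph.fromEdgeSet (Subtype.val '' J)).Adj a b) (u : V) :
    ∑ f : J, incMat G head tail u f * dartVec head J a b f
      = (if u = b then 1 else 0) - (if u = a then 1 else 0) := by
  obtain ⟨⟨e, he, hval⟩, hne⟩ := (SimpleGraph.fromEdgeSet_adj _).mp hab
  rw [Finset.sum_eq_single (⟨e, he⟩ : J)]
  · have hends : s(head e, tail e) = s(a, b) := (hor e).symm.trans hval
    rw [dartVec, if_pos hval]
    rcases Sym2.eq_iff.mp hends with ⟨hh, ht⟩ | ⟨hh, ht⟩
    · rw [if_neg (hh ▸ hne), hor.incMat_apply, hh, ht]; ring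
    · rw [if_pos hh, hor.incMat_apply, hh, ht]; ring
  · intro f _ hf
    rw [dartVec, if_neg, mul_zero]
    exact fun hc => hf (Subtype.ext (Subtype.ext (hc.trans hval.symm)))
  · exact fun h => absurd (Finset.mem_univ _) h

theorem IsOrientation.sum_incMat_mul_walkVec (hor : IsOrientation G head tail) {a b : V}
    (w : (SimpleGraph.fromEdgeSet (Subtype.val '' J)).Walk a b) (u : V) :
    ∑ f : J, incMat G head tail u f * walkVec head w f
      = (if u = b then 1 else 0) - (if u = a then 1 else 0) := by
  induction w with
  | nil => simp [walkVec]
  | @cons a c b h p ih =>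
    have hcons : walkVec head (.cons h p) = dartVec head J a c + walkVec head p := by
      simp [walkVec, SimpleGraph.Walk.darts_cons]
    simp only [hcons, Pi.add_apply, mul_add, Finset.sum_add_distrib, ih,
      hor.sum_incMat_mul_dartVec h u]
    ring

end WalkVector

section ReducedIncidence

variable {V : Type} [Fintype V] [DecidableEq V] {G : SimpleGraph V} {head tail : G.edgeSet → V}
  {v₀ : V} {J : Set G.edgeSet}

def redIncMat (head tail : G.edgeSet → V) (idx : {v : V // v ≠ v₀} ≃ J) :
    Matrix {v : V // v ≠ v₀} {v : V // v ≠ v₀} ℤ :=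
  Matrix.of fun u w => incMat G head tail u (idx w)

theorem det_redIncMat_eq_zero (hor : IsOrientation G head tail)
    (hdisconn : ¬ (SimpleGraph.fromEdgeSet (Subtype.val '' J)).Connected)
    (idx : {v : V // v ≠ v₀} ≃ J) : (redIncMat head tail idx).det = 0 := by
  set H := SimpleGraph.fromEdgeSet (Subtype.val '' J)
  obtain ⟨u₀, hu₀⟩ : ∃ u, ¬ H.Reachable v₀ u := by
    by_contra! h
    have : Nonempty V := ⟨v₀⟩
    exact hdisconn ⟨fun a b => (h a).symm.trans (h b)⟩
  classical
  let x : V → ℤ := fun v => if H.Reachable u₀ v then 1 else 0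
  have hx₀ : x v₀ = 0 := if_neg fun h => hu₀ h.symm
  refine Matrix.exists_vecMul_eq_zero_iff.mp ⟨fun u => x u, fun h => ?_, ?_⟩
  · have hu₀v₀ : u₀ ≠ v₀ := fun h => hu₀ (h ▸ .rfl)
    simpa [x] using congrFun h ⟨u₀, hu₀v₀⟩
  funext w
  have hadj : H.Adj (head (idx w)) (tail (idx w)) :=
    (SimpleGraph.fromEdgeSet_adj _).mpr ⟨⟨_, (idx w).prop, hor _⟩, hor.head_ne_tail _⟩
  have hreach : H.Reachable u₀ (head (idx w)) ↔ H.Reachable u₀ (tail (idx w)) :=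
    ⟨fun h => h.trans hadj.reachable, fun h => h.trans hadj.symm.reachable⟩
  have hends : x (head (idx w)) = x (tail (idx w)) := by simp only [x, hreach]
  have hsum := hor.sum_mul_incMat x (idx w)
  rw [Fintype.sum_eq_add_sum_subtype_ne _ v₀, hx₀, zero_mul, zero_add, hends, sub_self] at hsum
  exact hsum

theorem isUnit_det_redIncMat (hor : IsOrientation G head tail)
    (hconn : (SimpleGraph.fromEdgeSet (Subtype.val '' J)).Connected)
    (idx : {v : V // v ≠ v₀} ≃ J) : IsUnit (redIncMat head tail idx).det := by
  have : Fintype J := Fintype.ofEquiv _ idx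
  let walk (u : V) := (hconn.preconnected v₀ u).some
  refine Matrix.isUnit_det_of_right_inverse
    (B := Matrix.of fun w u => walkVec head (walk u) (idx w)) ?_
  ext u v
  rw [Matrix.mul_apply]
  simp only [redIncMat, Matrix.of_apply]
  rw [Equiv.sum_comp idx (fun f => incMat G head tail u f * walkVec head (walk v) f),
    hor.sum_incMat_mul_walkVec, if_neg u.prop, sub_zero]
  simp [Matrix.one_apply, Subtype.ext_iff]

end ReducedIncidence

open scoped Classical in
noncomputable def qIncMat {V : Type} [DecidableEq V] (G : SimpleGraph V)
    (head tail : G.edgeSet → V) (T : Set G.edgeSet) : Matrix V G.edgeSet ℤ[X] := fun v e =>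
  if e ∈ T then ((incMat G head tail v e : ℤ) : ℤ[X])
  else X * ((incMat G head tail v e : ℤ) : ℤ[X])

theorem det_qIncMat_submatrix {V : Type} [Fintype V] [DecidableEq V] {G : SimpleGraph V}
    (head tail : G.edgeSet → V) (T : Set G.edgeSet) {v₀ : V} {J : Set G.edgeSet}
    (idx : {v : V // v ≠ v₀} ≃ J) :
    (Matrix.of fun u w : {v : V // v ≠ v₀} => qIncMat G head tail T u (idx w)).det
      = X ^ (J \ T).ncard * ((redIncMat head tail idx).det : ℤ[X]) := by
  classical
  have : Fintype J := Fintype.ofEquiv _ idx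
  have hscale : (Matrix.of fun u w : {v : V // v ≠ v₀} => qIncMat G head tail T u (idx w))
      = Matrix.of fun u w => (if (idx w : G.edgeSet) ∈ T then 1 else X) *
          (redIncMat head tail idx).map (fun n : ℤ => (n : ℤ[X])) u w := by
    ext u w
    simp only [qIncMat, redIncMat, Matrix.of_apply, Matrix.map_apply]
    split_ifs <;> simp
  rw [hscale, Matrix.det_mul_row, ← Int.cast_det,
    Equiv.prod_comp idx (fun f => if (f : G.edgeSet) ∈ T then 1 else X),
    Fintype.prod_ite_mem_eq_pow_ncard_diff]

open scoped Classical in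
theorem stmt16_general (V : Type) [Fintype V] [DecidableEq V] (G : SimpleGraph V)
    (head tail : G.edgeSet → V) (hor : IsOrientation G head tail)
    (T : Set G.edgeSet)
    (v₀ : V)
    (J : Set G.edgeSet) (hJ : J.ncard + 1 = Fintype.card V) :
    let Dq : Matrix V G.edgeSet (Polynomial ℤ) := fun v e =>
      if e ∈ T then ((incMat G head tail v e : ℤ) : Polynomial ℤ)
      else Polynomial.X * ((incMat G head tail v e : ℤ) : Polynomial ℤ)
    (¬ IsSpanningTree G J →
      ∀ idx : {v : V // v ≠ v₀} ≃ {e : G.edgeSet // e ∈ J},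
        (Matrix.of fun u w : {v : V // v ≠ v₀} => Dq u.val (idx w).val).det = 0) ∧
    (IsSpanningTree G J →
      ∀ idx : {v : V // v ≠ v₀} ≃ {e : G.edgeSet // e ∈ J},
        (Matrix.of fun u w : {v : V // v ≠ v₀} => Dq u.val (idx w).val).det
            = Polynomial.X ^ (J \ T).ncard ∨
        (Matrix.of fun u w : {v : V // v ≠ v₀} => Dq u.val (idx w).val).det
            = -Polynomial.X ^ (J \ T).ncard) := by
  intro Dq
  have hDq : Dq = qIncMat G head tail T := rfl
  refine ⟨fun hns idx => ?_, fun hst idx => ?_⟩ <;>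
    rw [hDq, det_qIncMat_submatrix head tail T idx]
  · rw [det_redIncMat_eq_zero hor (fun hc => hns ⟨hc, hJ⟩) idx, Int.cast_zero, mul_zero]
  · rcases Int.isUnit_iff.mp (isUnit_det_redIncMat hor hst.1 idx) with h | h <;> simp [h]

open scoped Classical in
/-- Let `Γ` be a finite connected oriented simple graph with spanning
tree `T`, `v₀` a vertex, and `D_q` the q-incidence matrix over `ℤ[q]`.  For `J ⊆ E` with
`|J| = |V| − 1`, let `D_J` be the square submatrix of `D_q` with rows `V∖{v₀}` and
columns `J`.  If `J` is not a spanning tree then `det D_J = 0`; if `J` is a spanning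
tree then `det D_J = ±q^{|J∖T|}`. -/
theorem stmt16 (V : Type) [Fintype V] [DecidableEq V] (G : SimpleGraph V)
    [Fintype G.edgeSet]
    (head tail : G.edgeSet → V) (hor : IsOrientation G head tail)
    (hconn : G.Connected)
    (T : Set G.edgeSet) (hT : IsSpanningTree G T)
    (v₀ : V)
    (J : Set G.edgeSet) (hJ : J.ncard + 1 = Fintype.card V) :
    let Dq : Matrix V G.edgeSet (Polynomial ℤ) := fun v e =>
      if e ∈ T then ((incMat G head tail v e : ℤ) : Polynomial ℤ)
      else Polynomial.X * ((incMat G head tail v e : ℤ) : Polynomial ℤ)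
    (¬ IsSpanningTree G J →
      ∀ idx : {v : V // v ≠ v₀} ≃ {e : G.edgeSet // e ∈ J},
        (Matrix.of fun u w : {v : V // v ≠ v₀} => Dq u.val (idx w).val).det = 0) ∧
    (IsSpanningTree G J →
      ∀ idx : {v : V // v ≠ v₀} ≃ {e : G.edgeSet // e ∈ J},
        (Matrix.of fun u w : {v : V // v ≠ v₀} => Dq u.val (idx w).val).det
            = Polynomial.X ^ (J \ T).ncard ∨
        (Matrix.of fun u w : {v : V // v ≠ v₀} => Dq u.val (idx w).val).det
            = -Polynomial.X ^ (J \ T).ncard) :=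
  stmt16_general V G head tail hor T v₀ J hJ
end

section
/- Let Γ be a finite connected oriented simple graph with spanning tree T, fix a vertex v₀ ∈ V, and let D₀ be the q-incidence matrix D_q with the row indexed by v₀ deleted, and Q₀ := D₀·D₀ᵗ. Then there exists an integer matrix P ∈ Mat_{(V∖{v₀})×T}(ℤ) such that G_C(Γ,T) = Pᵗ·Q₀·P (the matrix products computed over ℤ[q,q⁻¹] after regarding P as a matrix of constants); moreover det P = ±1. In particular, Q₀ is a Gram matrix for the q-cut lattice of (Γ,T). -/
/-!
Shift each potential `y_e` of the fundamental cut `K_e = Dᵗ y_e` so that it vanishes at `v₀`;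
since every column of `D` sums to zero, this does not change `Dᵗ y_e`. Hence the matrix `P` of
shifted potentials, with row `v₀` dropped, satisfies `A₀ᵗ P = Kᵗ`, where `A₀` is `D` without
row `v₀`. Over `ℤ[q,q⁻¹]` we have `D₀ = A₀ · diag w` with `w = 1` on `T` and `w = q` off `T`,
so `Pᵗ Q₀ P = K · diag w² · Kᵗ`; this is `G_C(Γ,T)` because the columns of `K` indexed by `T`
form the identity matrix. The same fact shows that the rows of `A₀ᵗ` indexed by `T` form a left
inverse of `P`, so `det P` is a unit of `ℤ`.
-/

open LaurentPolynomial

/-- The q-cut Gram matrix of `(Γ,T)` built from a family `K` of fundamental cuts. -/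
noncomputable def qCutGram {V : Type} [DecidableEq V] (G : SimpleGraph V)
    [Fintype G.edgeSet] (T : Set G.edgeSet)
    (K : {e : G.edgeSet // e ∈ T} → G.edgeSet → ℤ) :
    Matrix {e : G.edgeSet // e ∈ T} {e : G.edgeSet // e ∈ T} (LaurentPolynomial ℤ) :=
  fun e e' => if e = e' then
    1 + (((∑ f, K e f * K e f) - 1 : ℤ) : LaurentPolynomial ℤ) * LaurentPolynomial.T 2
  else (((∑ f, K e f * K e' f : ℤ)) : LaurentPolynomial ℤ) * LaurentPolynomial.T 2

open Matrix

theorem transpose_submatrix_mul_sub_eq {V E ι R : Type*} [Fintype V] [DecidableEq V] [CommRing R]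
    {A : Matrix V E R} (hA : ∀ f, ∑ v, A v f = 0) (y : ι → V → R) (v₀ : V) :
    (A.submatrix Subtype.val id)ᵀ * of (fun (v : {v // v ≠ v₀}) i => y i v - y i v₀) =
      of fun f i => (Aᵀ *ᵥ y i) f := by
  ext f i : 1
  have hshift : (Aᵀ *ᵥ y i) f = ∑ v, A v f * (y i v - y i v₀) := by
    simp only [mulVec, dotProduct, transpose_apply, mul_sub, Finset.sum_sub_distrib,
      ← Finset.sum_mul, hA, zero_mul, sub_zero]
  rw [of_apply, hshift, Fintype.sum_eq_add_sum_subtype_ne _ v₀, sub_self, mul_zero, zero_add]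
  rfl

theorem transpose_mul_mul_diagonal_mul_transpose_mul {m n p R : Type*} [Fintype m] [Fintype n]
    [DecidableEq n] [CommRing R] (A : Matrix m n R) (w : n → R) (P : Matrix m p R) :
    Pᵀ * (A * diagonal w * (A * diagonal w)ᵀ) * P =
      (Aᵀ * P)ᵀ * diagonal (fun f => w f ^ 2) * (Aᵀ * P) := by
  simp only [transpose_mul, diagonal_transpose, transpose_transpose, Matrix.mul_assoc]
  rw [← Matrix.mul_assoc (diagonal w), diagonal_mul_diagonal]
  simp only [sq]

theorem IsOrientation.head_ne_tail_s17 {V : Type} {G : SimpleGraph V} {head tail : G.edgeSet → V}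
    (hor : IsOrientation G head tail) (e : G.edgeSet) : head e ≠ tail e := by
  intro h
  have he := e.2
  rw [hor e, h] at he
  exact G.irrefl he

theorem IsOrientation.sum_incMat_eq_zero {V : Type} [Fintype V] [DecidableEq V]
    {G : SimpleGraph V} {head tail : G.edgeSet → V} (hor : IsOrientation G head tail)
    (e : G.edgeSet) : ∑ v, incMat G head tail v e = 0 := by
  simp [incMat, Finset.sum_ite, Finset.filter_eq', Finset.filter_ne', (hor.head_ne_tail_s17 e).symm]

noncomputable def qWeight {E : Type*} (T : Set E) [DecidablePred (· ∈ T)] (f : E) :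
    ℤ[T;T⁻¹] :=
  if f ∈ T then 1 else LaurentPolynomial.T 1

theorem qWeight_sq {E : Type*} (T : Set E) [DecidablePred (· ∈ T)] (f : E) :
    qWeight T f ^ 2 = LaurentPolynomial.T 2 + if f ∈ T then 1 - LaurentPolynomial.T 2 else 0 := by
  unfold qWeight
  split_ifs
  · ring
  · rw [sq, ← T_add, add_zero]; norm_num

section Cuts

variable {V : Type} [DecidableEq V] {G : SimpleGraph V} {T : Set G.edgeSet}
  {K : {e : G.edgeSet // e ∈ T} → G.edgeSet → ℤ}

theorem submatrix_of_cuts_eq_one (hKe : ∀ e, K e e.val = 1)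
    (hKsupp : ∀ e (e' : G.edgeSet), e' ∈ T → e' ≠ e.val → K e e' = 0) :
    (of K).submatrix id (Subtype.val : {e // e ∈ T} → G.edgeSet) = 1 := by
  ext e f
  by_cases h : e = f
  · subst h; simp [hKe]
  · rw [one_apply_ne h]
    exact hKsupp e f f.2 fun hfe => h (Subtype.ext hfe).symm

theorem qCutGram_eq_mul_diagonal_mul [Fintype G.edgeSet] [DecidablePred (· ∈ T)]
    (hK : (of K).submatrix id (Subtype.val : {e // e ∈ T} → G.edgeSet) = 1) :
    qCutGram G T K = (of K).map (Int.cast : ℤ → ℤ[T;T⁻¹]) *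
      diagonal (fun f => qWeight T f ^ 2) * (of K)ᵀ.map (Int.cast : ℤ → ℤ[T;T⁻¹]) := by
  have hrestrict (e : {e // e ∈ T}) (f : G.edgeSet) :
      (if f ∈ T then K e f else 0) = if e.val = f then 1 else 0 := by
    split_ifs with hf hef hef
    · subst hef; simpa using congrFun₂ hK e e
    · have hne : e ≠ ⟨f, hf⟩ := fun h => hef (by rw [h])
      simpa [one_apply_ne hne] using congrFun₂ hK e ⟨f, hf⟩
    · exact absurd (hef ▸ e.2) hf
    · rfl
  have hsum (e e' : {e // e ∈ T}) :
      ∑ f, (K e f : ℤ[T;T⁻¹]) * qWeight T f ^ 2 * (K e' f : ℤ[T;T⁻¹]) =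
        ((∑ f, K e f * K e' f : ℤ) : ℤ[T;T⁻¹]) * LaurentPolynomial.T 2 +
          if e = e' then 1 - LaurentPolynomial.T 2 else 0 := by
    have hterm (f : G.edgeSet) :
        (K e f : ℤ[T;T⁻¹]) * qWeight T f ^ 2 * (K e' f : ℤ[T;T⁻¹]) =
          ((K e f * K e' f : ℤ) : ℤ[T;T⁻¹]) * LaurentPolynomial.T 2 +
            (1 - LaurentPolynomial.T 2) *
              (((if f ∈ T then K e f else 0) * K e' f : ℤ) : ℤ[T;T⁻¹]) := by
      rw [qWeight_sq]
      split_ifs <;> push_cast <;> ring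
    simp only [hterm, Finset.sum_add_distrib, ← Finset.sum_mul, ← Finset.mul_sum,
      ← Int.cast_sum, hrestrict, ite_mul, one_mul, zero_mul, Finset.sum_ite_eq, Finset.mem_univ, if_true]
    have hKe'e : K e' e = if e = e' then 1 else 0 := by
      simpa [one_apply, eq_comm] using congrFun₂ hK e' e
    rw [hKe'e]
    split_ifs <;> simp
  ext e e' : 1
  rw [mul_apply]
  simp only [mul_diagonal, map_apply, transpose_apply, of_apply, hsum, qCutGram]
  split_ifs with h
  · subst h; push_cast; ring
  · ring

end Cuts

open scoped Classical in
theorem stmt17_general (V : Type) [Fintype V] [DecidableEq V] (G : SimpleGraph V)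
    [Fintype G.edgeSet]
    (head tail : G.edgeSet → V) (hor : IsOrientation G head tail)
    (T : Set G.edgeSet)
    (K : {e : G.edgeSet // e ∈ T} → G.edgeSet → ℤ)
    (hKrow : ∀ e, ∃ y : V → ℤ, (incMat G head tail).transpose.mulVec y = K e)
    (hKe : ∀ e, K e e.val = 1)
    (hKsupp : ∀ e (e' : G.edgeSet), e' ∈ T → e' ≠ e.val → K e e' = 0)
    (v₀ : V) :
    let Dq : Matrix V G.edgeSet (LaurentPolynomial ℤ) := fun v e =>
      if e ∈ T then ((incMat G head tail v e : ℤ) : LaurentPolynomial ℤ)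
      else LaurentPolynomial.T 1 * ((incMat G head tail v e : ℤ) : LaurentPolynomial ℤ)
    let D₀ : Matrix {v : V // v ≠ v₀} G.edgeSet (LaurentPolynomial ℤ) :=
      fun v e => Dq v.val e
    let Q₀ : Matrix {v : V // v ≠ v₀} {v : V // v ≠ v₀} (LaurentPolynomial ℤ) :=
      D₀ * D₀.transpose
    ∃ P : Matrix {v : V // v ≠ v₀} {e : G.edgeSet // e ∈ T} ℤ,
      qCutGram G T K =
        (P.map (Int.cast : ℤ → LaurentPolynomial ℤ)).transpose * Q₀ *
          P.map (Int.cast : ℤ → LaurentPolynomial ℤ) ∧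
      ∀ idx : {e : G.edgeSet // e ∈ T} ≃ {v : V // v ≠ v₀},
        (Matrix.of fun e e' : {e : G.edgeSet // e ∈ T} => P (idx e) e').det = 1 ∨
        (Matrix.of fun e e' : {e : G.edgeSet // e ∈ T} => P (idx e) e').det = -1 := by
  intro Dq D₀ Q₀
  choose y hy using hKrow
  set A₀ := (incMat G head tail).submatrix (Subtype.val : {v // v ≠ v₀} → V) id
  set P : Matrix {v : V // v ≠ v₀} {e : G.edgeSet // e ∈ T} ℤ :=
    of fun v e => y e v - y e v₀
  have hA₀P : A₀ᵀ * P = (of K)ᵀ := by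
    refine (transpose_submatrix_mul_sub_eq hor.sum_incMat_eq_zero y v₀).trans ?_
    ext f e : 1
    simp only [hy, of_apply, transpose_apply]
  have hD₀ : D₀ = A₀.map (Int.cast : ℤ → ℤ[T;T⁻¹]) * diagonal (qWeight T) := by
    ext v f : 1
    simp only [D₀, Dq, A₀, mul_diagonal, map_apply, submatrix_apply, qWeight, id]
    split_ifs <;> ring
  have hK := submatrix_of_cuts_eq_one hKe hKsupp
  have hcast : A₀ᵀ.map (Int.cast : ℤ → ℤ[T;T⁻¹]) *
      P.map (Int.cast : ℤ → ℤ[T;T⁻¹]) = (of K)ᵀ.map Int.cast := by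
    rw [← hA₀P]
    exact (Matrix.map_mul (f := Int.castRingHom _)).symm
  refine ⟨P, ?_, fun idx => ?_⟩
  · rw [qCutGram_eq_mul_diagonal_mul hK, show Q₀ = D₀ * D₀ᵀ from rfl, hD₀,
      transpose_mul_mul_diagonal_mul_transpose_mul, ← transpose_map, hcast, transpose_map,
      transpose_transpose]
  · refine Int.isUnit_iff.mp <|
      isUnit_det_of_left_inverse (B := A₀ᵀ.submatrix Subtype.val idx) ?_
    rw [show (of fun e e' => P (idx e) e') = P.submatrix idx id from rfl, submatrix_mul_equiv,
      hA₀P, ← transpose_submatrix, hK, transpose_one]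

open scoped Classical in
/-- Let `Γ` be a finite connected oriented simple graph with spanning
tree `T`, `v₀` a vertex, `D₀` the q-incidence matrix with the row of `v₀` deleted, and
`Q₀ = D₀·D₀ᵗ`.  Then there is an integer matrix `P` with `G_C(Γ,T) = Pᵗ·Q₀·P` and
`det P = ±1`; in particular `Q₀` is a Gram matrix for the q-cut lattice of `(Γ,T)`. -/
theorem stmt17 (V : Type) [Fintype V] [DecidableEq V] (G : SimpleGraph V)
    [Fintype G.edgeSet]
    (head tail : G.edgeSet → V) (hor : IsOrientation G head tail)
    (hconn : G.Connected)
    (T : Set G.edgeSet) (hT : IsSpanningTree G T)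
    (K : {e : G.edgeSet // e ∈ T} → G.edgeSet → ℤ)
    (hKrow : ∀ e, ∃ y : V → ℤ, (incMat G head tail).transpose.mulVec y = K e)
    (hKe : ∀ e, K e e.val = 1)
    (hKsupp : ∀ e (e' : G.edgeSet), e' ∈ T → e' ≠ e.val → K e e' = 0)
    (v₀ : V) :
    let Dq : Matrix V G.edgeSet (LaurentPolynomial ℤ) := fun v e =>
      if e ∈ T then ((incMat G head tail v e : ℤ) : LaurentPolynomial ℤ)
      else LaurentPolynomial.T 1 * ((incMat G head tail v e : ℤ) : LaurentPolynomial ℤ)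
    let D₀ : Matrix {v : V // v ≠ v₀} G.edgeSet (LaurentPolynomial ℤ) :=
      fun v e => Dq v.val e
    let Q₀ : Matrix {v : V // v ≠ v₀} {v : V // v ≠ v₀} (LaurentPolynomial ℤ) :=
      D₀ * D₀.transpose
    ∃ P : Matrix {v : V // v ≠ v₀} {e : G.edgeSet // e ∈ T} ℤ,
      qCutGram G T K =
        (P.map (Int.cast : ℤ → LaurentPolynomial ℤ)).transpose * Q₀ *
          P.map (Int.cast : ℤ → LaurentPolynomial ℤ) ∧
      ∀ idx : {e : G.edgeSet // e ∈ T} ≃ {v : V // v ≠ v₀},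
        (Matrix.of fun e e' : {e : G.edgeSet // e ∈ T} => P (idx e) e').det = 1 ∨
        (Matrix.of fun e e' : {e : G.edgeSet // e ∈ T} => P (idx e) e').det = -1 :=
  stmt17_general V G head tail hor T K hKrow hKe hKsupp v₀
end
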